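/- arXiv:1210.2835 — 3 statements merged into one kernel-verified Lean document; each statement's English description precedes it below -/
import Mathlib

section
/- Let h be an expansive homeomorphism of a compact metric space with the shadowing property. Then the set of periodic points of h is dense in the chain recurrent set of h. -/
/-- Iterates of a homeomorphism indexed by `ℤ`. -/
def iterZ {K : Type*} [TopologicalSpace K] (h : K ≃ₜ K) : ℤ → K → K
  | Int.ofNat n => (⇑h)^[n]
  | Int.negSucc n => (⇑h.symm)^[n + 1]

lemma iterZ_eq_perm {K : Type*} [TopologicalSpace K] (h : K ≃ₜ K) (i : ℤ) :
    iterZ h i = ⇑((h.toEquiv : Equiv.Perm K) ^ i) := by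
  cases i with
  | ofNat n =>
    show (⇑h)^[n] = _
    rw [show (Int.ofNat n : ℤ) = (n : ℤ) from rfl, zpow_natCast, Equiv.Perm.coe_pow]
    rfl
  | negSucc n =>
    show (⇑h.symm)^[n + 1] = _
    rw [zpow_negSucc, ← inv_pow, Equiv.Perm.coe_pow]
    rfl

lemma iterZ_add {K : Type*} [TopologicalSpace K] (h : K ≃ₜ K) (a b : ℤ) (z : K) :
    iterZ h a (iterZ h b z) = iterZ h (a + b) z := by
  simp only [iterZ_eq_perm, ← Equiv.Perm.mul_apply, ← zpow_add]

/-- An expansive homeomorphism of a compact metric space with the shadowing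
property has its periodic points dense in its chain recurrent set. -/
theorem periodic_points_dense_in_chain_recurrent_set
    {K : Type*} [MetricSpace K] [CompactSpace K] (h : K ≃ₜ K)
    (c : ℝ) (hc : 0 < c)
    (hexp : ∀ x y : K, (∀ i : ℤ, dist (iterZ h i x) (iterZ h i y) ≤ c) → x = y)
    (hshad : ∀ δ > (0 : ℝ), ∃ ε > (0 : ℝ), ∀ x : ℤ → K,
      (∀ i : ℤ, dist (h (x i)) (x (i + 1)) < ε) →
      ∃ y : K, ∀ i : ℤ, dist (iterZ h i y) (x i) ≤ δ) :
    ∀ x : K,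
      (∀ ε > (0 : ℝ), ∃ n : ℕ, 1 ≤ n ∧ ∃ p : ℕ → K, p 0 = x ∧ p n = x ∧
        ∀ i < n, dist (h (p i)) (p (i + 1)) < ε) →
      ∀ r > (0 : ℝ), ∃ q : K, (∃ m : ℕ, 1 ≤ m ∧ (⇑h)^[m] q = q) ∧ dist q x < r := by
  intro x hcr r hr
  set δ : ℝ := min (r / 2) (c / 2) with hδdef
  have hδpos : 0 < δ := lt_min (by linarith) (by linarith)
  obtain ⟨ε, hεpos, hε⟩ := hshad δ hδpos
  obtain ⟨n, hn1, p, hp0, hpn, hp⟩ := hcr ε hεpos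
  have hnZ : (0 : ℤ) < (n : ℤ) := by exact_mod_cast hn1
  -- periodic pseudo-orbit
  set X : ℤ → K := fun i => p (i % (n : ℤ)).toNat with hX
  have hmod_nonneg : ∀ i : ℤ, 0 ≤ i % (n : ℤ) := fun i => Int.emod_nonneg i (by omega)
  have hmod_lt : ∀ i : ℤ, i % (n : ℤ) < n := fun i => Int.emod_lt_of_pos i hnZ
  have hXper : ∀ i : ℤ, X (i + n) = X i := by
    intro i
    have : (i + n) % (n : ℤ) = i % (n : ℤ) := by
      conv_lhs => rw [show i + (n : ℤ) = i + (n : ℤ) * 1 by ring, Int.add_mul_emod_self_left]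
    simp only [hX, this]
  have hmod_succ : ∀ i : ℤ, (i + 1) % (n : ℤ) = (i % n + 1) % n := by
    intro i
    conv_lhs => rw [show i + 1 = (i % (n:ℤ) + 1) + (n : ℤ) * (i / n) by
      have := Int.emod_add_mul_ediv i (n : ℤ); ring_nf; linarith]
    rw [Int.add_mul_emod_self_left]
  have hXpo : ∀ i : ℤ, dist (h (X i)) (X (i + 1)) < ε := by
    intro i
    have hlt := hmod_lt i
    have hge := hmod_nonneg i
    set m : ℕ := (i % (n : ℤ)).toNat with hm
    have hmn : m < n := by omega
    have hXi : X i = p m := rfl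
    rcases eq_or_lt_of_le (Nat.succ_le_of_lt hmn) with heq | hlt2
    · -- m + 1 = n
      have : (i + 1) % (n : ℤ) = 0 := by
        rw [hmod_succ i, show i % (n:ℤ) + 1 = (n : ℤ) by omega, Int.emod_self]
      have hX1 : X (i + 1) = p 0 := by simp only [hX, this]; rfl
      rw [hXi, hX1, hp0, ← hpn, ← heq]
      exact hp m hmn
    · have : (i + 1) % (n : ℤ) = i % n + 1 := by
        rw [hmod_succ i]; exact Int.emod_eq_of_lt (by omega) (by omega)
      have hX1 : X (i + 1) = p (m + 1) := by simp only [hX, this]; congr 1; omega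
      rw [hXi, hX1]
      exact hp m hmn
  obtain ⟨y, hy⟩ := hε X hXpo
  refine ⟨y, ⟨n, hn1, ?_⟩, ?_⟩
  · refine hexp _ _ (fun i => ?_)
    have h1 : iterZ h i ((⇑h)^[n] y) = iterZ h (i + n) y := by
      rw [show (⇑h)^[n] y = iterZ h (n : ℤ) y from rfl, iterZ_add]
    calc dist (iterZ h i ((⇑h)^[n] y)) (iterZ h i y)
        ≤ dist (iterZ h i ((⇑h)^[n] y)) (X i) + dist (X i) (iterZ h i y) :=
          dist_triangle _ _ _
      _ ≤ δ + δ := by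
          refine add_le_add ?_ ?_
          · rw [h1, ← hXper i]; exact hy (i + n)
          · rw [dist_comm]; exact hy i
      _ ≤ c := by
          have : δ ≤ c / 2 := min_le_right _ _
          linarith
  · have h0 : iterZ h 0 y = y := rfl
    have hX0 : X 0 = x := by
      simp only [hX, Int.zero_emod, Int.toNat_zero, hp0]
    calc dist y x = dist (iterZ h 0 y) (X 0) := by rw [h0, hX0]
      _ ≤ δ := hy 0
      _ < r := lt_of_le_of_lt (min_le_left _ _) (by linarith)
end

section
/- Let h be a homeomorphism of a compact metric space with the shadowing property. Then the chain recurrent set of h coincides with the non-wandering set of h. -/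
/-- For a homeomorphism of a compact metric space with the shadowing property,
the chain recurrent set coincides with the non-wandering set. -/
theorem chain_recurrent_eq_nonwandering
    {K : Type*} [MetricSpace K] [CompactSpace K] (h : K ≃ₜ K)
    (hshad : ∀ δ > (0 : ℝ), ∃ ε > (0 : ℝ), ∀ x : ℤ → K,
      (∀ i : ℤ, dist (h (x i)) (x (i + 1)) < ε) →
      ∃ y : K, ∀ i : ℤ, dist (iterZ h i y) (x i) ≤ δ) :
    ∀ x : K,
      (∀ ε > (0 : ℝ), ∃ n : ℕ, 1 ≤ n ∧ ∃ p : ℕ → K, p 0 = x ∧ p n = x ∧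
        ∀ i < n, dist (h (p i)) (p (i + 1)) < ε) ↔
      (∀ U : Set K, IsOpen U → x ∈ U →
        ∃ n : ℕ, 1 ≤ n ∧ ((⇑h)^[n] '' U ∩ U).Nonempty) := by
  intro x
  constructor
  · -- chain recurrent → nonwandering
    intro hcr U hU hxU
    obtain ⟨r, hr, hball⟩ := Metric.isOpen_iff.mp hU x hxU
    obtain ⟨ε, hε, hsh⟩ := hshad (r/2) (by positivity)
    obtain ⟨n, hn, p, hp0, hpn, hp⟩ := hcr ε hε
    have hn' : (0:ℤ) < (n:ℤ) := by exact_mod_cast hn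
    set X : ℤ → K := fun i => p ((i % (n:ℤ)).toNat) with hX
    have hXpseudo : ∀ i : ℤ, dist (h (X i)) (X (i+1)) < ε := by
      intro i
      have h0 : 0 ≤ i % (n:ℤ) := Int.emod_nonneg i (by omega)
      have h1 : i % (n:ℤ) < n := Int.emod_lt_of_pos i hn'
      set m := (i % (n:ℤ)).toNat with hm
      have hm' : (m:ℤ) = i % (n:ℤ) := Int.toNat_of_nonneg h0
      have hmlt : m < n := by omega
      have hmod : (i+1) % (n:ℤ) = (i % (n:ℤ) + 1) % (n:ℤ) := by
        conv_lhs => rw [show i + 1 = i % (n:ℤ) + 1 + (n:ℤ) * (i / n) by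
          rw [Int.emod_def]; ring]
        rw [Int.add_mul_emod_self_left]
      by_cases hc : m + 1 < n
      · have he : (i+1) % (n:ℤ) = (m:ℤ) + 1 := by
          rw [hmod, ← hm', Int.emod_eq_of_lt (by omega) (by exact_mod_cast hc)]
        have he' : ((i+1) % (n:ℤ)).toNat = m + 1 := by omega
        show dist (h (p m)) (p (((i+1) % (n:ℤ)).toNat)) < ε
        rw [he']
        exact hp m hmlt
      · have hmn : m + 1 = n := by omega
        have he : (i+1) % (n:ℤ) = 0 := by
          rw [hmod, ← hm', show (m:ℤ) + 1 = (n:ℤ) by exact_mod_cast hmn,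
            Int.emod_self]
        have he' : ((i+1) % (n:ℤ)).toNat = 0 := by omega
        show dist (h (p m)) (p (((i+1) % (n:ℤ)).toNat)) < ε
        rw [he', hp0, ← hpn, ← hmn]
        exact hp m hmlt
    obtain ⟨y, hy⟩ := hsh X hXpseudo
    have hX0 : X 0 = x := by
      show p ((0 % (n:ℤ)).toNat) = x
      simpa using hp0
    have hXn : X (n:ℤ) = x := by
      show p (((n:ℤ) % (n:ℤ)).toNat) = x
      rw [Int.emod_self]
      simpa using hp0
    have hy0 : dist y x ≤ r/2 := by
      have := hy 0
      rwa [hX0] at this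
    have hyn : dist ((⇑h)^[n] y) x ≤ r/2 := by
      have := hy (n:ℤ)
      rwa [hXn] at this
    have hyU : y ∈ U := hball (by rw [Metric.mem_ball]; linarith)
    have hynU : (⇑h)^[n] y ∈ U := hball (by rw [Metric.mem_ball]; linarith)
    exact ⟨n, hn, (⇑h)^[n] y, ⟨y, hyU, rfl⟩, hynU⟩
  · -- nonwandering → chain recurrent
    intro hnw ε hε
    obtain ⟨δ, hδ, hcont⟩ :=
      Metric.continuousAt_iff.mp (h.continuous.continuousAt (x := x)) (ε/2)
        (by positivity)
    set ρ := min δ (ε/2) with hρdef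
    have hρ : 0 < ρ := lt_min hδ (by positivity)
    obtain ⟨n, hn, u, ⟨z, hzU, rfl⟩, huU⟩ :=
      hnw (Metric.ball x ρ) Metric.isOpen_ball (Metric.mem_ball_self hρ)
    have hz1 : dist z x < δ := lt_of_lt_of_le (Metric.mem_ball.mp hzU) (min_le_left _ _)
    have hz2 : dist (h z) (h x) < ε/2 := hcont hz1
    have hu : dist ((⇑h)^[n] z) x < ε/2 :=
      lt_of_lt_of_le (Metric.mem_ball.mp huU) (min_le_right _ _)
    refine ⟨n, hn, fun i => if i = 0 ∨ n ≤ i then x else (⇑h)^[i] z,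
      by simp, by simp, ?_⟩
    intro i hi
    by_cases hi0 : i = 0
    · subst hi0
      by_cases hn1 : n ≤ 1
      · have : n = 1 := le_antisymm hn1 hn
        subst this
        simp only [true_or, if_pos, le_refl, or_true]
        have : (⇑h)^[1] z = h z := by simp
        rw [this] at hu
        calc dist (h x) x ≤ dist (h x) (h z) + dist (h z) x := dist_triangle _ _ _
          _ < ε/2 + ε/2 := by
              rw [dist_comm (h x) (h z)]
              exact add_lt_add hz2 hu
          _ = ε := by ring
      · have hcond : ¬ (0 + 1 = 0 ∨ n ≤ 0 + 1) := by omega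
        simp only [true_or, if_pos, if_neg hcond]
        have : (⇑h)^[0+1] z = h z := by simp
        rw [this, dist_comm]
        linarith
    · by_cases hc : i + 1 < n
      · have hcond1 : ¬ (i = 0 ∨ n ≤ i) := by omega
        have hcond2 : ¬ (i + 1 = 0 ∨ n ≤ i + 1) := by omega
        simp only [if_neg hcond1, if_neg hcond2]
        rw [Function.iterate_succ_apply' h i z, dist_self]
        exact hε
      · have hin : i + 1 = n := by omega
        have hcond1 : ¬ (i = 0 ∨ n ≤ i) := by omega
        have hcond2 : i + 1 = 0 ∨ n ≤ i + 1 := by omega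
        simp only [if_neg hcond1, if_pos hcond2]
        have : h ((⇑h)^[i] z) = (⇑h)^[n] z := by
          rw [← hin, Function.iterate_succ_apply' h i z]
        rw [this]
        linarith
end

section
/- Let A ∈ SL(2, ℤ) be a hyperbolic matrix acting on the torus 𝕋² = ℝ²/ℤ², and let φ be the induced homeomorphism on the quotient S = 𝕋²/{±id}. Then φ is not expansive: for every c > 0 there exist distinct points x, y ∈ S with d(φ^n(x), φ^n(y)) ≤ c for all n ∈ ℤ. -/
/-!
Since `det A = 1`, the eigenvalues of `A` are the roots of `X² - tX + 1`; if `t² < 4` they would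
lie on the unit circle, so hyperbolicity forces a real eigenvalue `μ`, and `μ⁻¹` is one too. Pick
small eigenvectors `a` for `μ` and `b` for `μ⁻¹` and project `x = a + b`, `y = -a + b` to the
torus. At time `n` the lifts are `μⁿa ± μ⁻ⁿb`, so `x - y` is the image of `2μⁿa` and `x + y` that
of `2μ⁻ⁿb`. One of `|μ|ⁿ`, `|μ|⁻ⁿ` is at most `1`, so the two orbits stay `2 max ‖a‖ ‖b‖`-close
in the quotient by `±id`. Because `2a` and `2b` are nonzero and short, `y ≠ ±x`.
-/

/-- The 2-torus `ℝ²/ℤ²`. -/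
abbrev Torus2 : Type := AddCircle (1 : ℝ) × AddCircle (1 : ℝ)

open Polynomial

namespace Matrix

theorem isRoot_charpoly_fin_two_iff {R : Type*} [CommRing R] [Nontrivial R]
    (M : Matrix (Fin 2) (Fin 2) R) (μ : R) :
    M.charpoly.IsRoot μ ↔ μ ^ 2 - M.trace * μ + M.det = 0 := by
  simp [charpoly_fin_two]

theorem ne_zero_of_isRoot_charpoly {R n : Type*} [CommRing R] [IsDomain R] [Fintype n]
    [DecidableEq n] {M : Matrix n n R} (hM : M.det ≠ 0) {μ : R} (hμ : M.charpoly.IsRoot μ) :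
    μ ≠ 0 := by
  rintro rfl
  rw [IsRoot.def, eval_charpoly, map_zero, zero_sub, det_neg] at hμ
  exact hM ((mul_eq_zero.1 hμ).resolve_left (pow_ne_zero _ (neg_ne_zero.2 one_ne_zero)))

theorem isRoot_charpoly_inv_of_det_eq_one {K : Type*} [Field K] {M : Matrix (Fin 2) (Fin 2) K}
    (hdet : M.det = 1) {μ : K} (hμ : M.charpoly.IsRoot μ) : M.charpoly.IsRoot μ⁻¹ := by
  have hμ0 : μ ≠ 0 := ne_zero_of_isRoot_charpoly (hdet ▸ one_ne_zero) hμ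
  rw [isRoot_charpoly_fin_two_iff, hdet] at hμ ⊢
  field_simp
  linear_combination hμ

theorem exists_isRoot_charpoly_fin_two (M : Matrix (Fin 2) (Fin 2) ℝ)
    (h : 4 * M.det ≤ M.trace ^ 2) : ∃ μ, M.charpoly.IsRoot μ := by
  have hdiscrim : discrim 1 (-M.trace) M.det = √(M.trace ^ 2 - 4 * M.det) ^ 2 := by
    rw [Real.sq_sqrt (by linarith), discrim]
    ring
  obtain ⟨μ, hμ⟩ := exists_quadratic_eq_zero one_ne_zero ⟨_, hdiscrim.trans (sq _)⟩
  exact ⟨μ, (isRoot_charpoly_fin_two_iff M μ).2 (by linear_combination hμ)⟩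

theorem exists_mulVec_eq_smul_of_isRoot_charpoly {K n : Type*} [Field K] [Fintype n]
    [DecidableEq n] (M : Matrix n n K) {μ : K} (hμ : M.charpoly.IsRoot μ) :
    ∃ v ≠ 0, M *ᵥ v = μ • v := by
  rw [IsRoot.def, eval_charpoly, ← exists_mulVec_eq_zero_iff] at hμ
  obtain ⟨v, hv0, hv⟩ := hμ
  refine ⟨v, hv0, ?_⟩
  rw [sub_mulVec, sub_eq_zero] at hv
  rw [← hv]
  ext i
  simp [mulVec_diagonal]

theorem exists_mulVec_eq_smul_norm_eq {n : Type*} [Fintype n] [DecidableEq n]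
    (M : Matrix n n ℝ) {μ : ℝ} (hμ : M.charpoly.IsRoot μ) {δ : ℝ} (hδ : 0 ≤ δ) :
    ∃ v, ‖v‖ = δ ∧ M *ᵥ v = μ • v := by
  obtain ⟨v, hv0, hv⟩ := M.exists_mulVec_eq_smul_of_isRoot_charpoly hμ
  refine ⟨(δ / ‖v‖) • v, ?_, by rw [mulVec_smul, hv, smul_comm]⟩
  rw [norm_smul, Real.norm_of_nonneg (by positivity), div_mul_cancel₀ _ (norm_ne_zero_iff.2 hv0)]

end Matrix

theorem Complex.exists_sq_sub_mul_add_one_eq_zero_norm_eq_one {t : ℝ} (ht : t ^ 2 < 4) :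
    ∃ z : ℂ, z ^ 2 - t * z + 1 = 0 ∧ ‖z‖ = 1 := by
  set s := √(4 - t ^ 2)
  have hs : s ^ 2 = 4 - t ^ 2 := Real.sq_sqrt (by linarith)
  refine ⟨⟨t / 2, s / 2⟩, Complex.ext ?_ ?_, ?_⟩
  · simp [sq]
    nlinarith
  · simp [sq]
    ring
  · rw [Complex.norm_def, Real.sqrt_eq_one, Complex.normSq_mk]
    nlinarith

open Matrix

theorem iterZ_apply_eq_of_apply_eq_succ {K : Type*} [TopologicalSpace K] (h : K ≃ₜ K)
    (γ : ℤ → K) (hγ : ∀ n, h (γ n) = γ (n + 1)) (n : ℤ) : iterZ h n (γ 0) = γ n := by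
  have forward (k : ℕ) : (⇑h)^[k] (γ 0) = γ k := by
    induction k with
    | zero => rfl
    | succ k ih => rw [Function.iterate_succ_apply', ih, hγ, Nat.cast_succ]
  have backward (k : ℕ) : (⇑h.symm)^[k] (γ 0) = γ (-k) := by
    induction k with
    | zero => rfl
    | succ k ih =>
      rw [Function.iterate_succ_apply', ih, h.symm_apply_eq, hγ]
      congr 1
      push_cast
      ring
  cases n with
  | ofNat k => exact forward k
  | negSucc k => exact backward (k + 1)

def toTorus : (Fin 2 → ℝ) →+ Torus2 where
  toFun u := (u 0, u 1)
  map_zero' := rfl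
  map_add' u v := by simp only [Pi.add_apply, AddCircle.coe_add, Prod.mk_add_mk]

theorem toTorus_apply (u : Fin 2 → ℝ) :
    toTorus u = ((u 0 : AddCircle (1 : ℝ)), (u 1 : AddCircle (1 : ℝ))) := rfl

theorem norm_toTorus_le (u : Fin 2 → ℝ) : ‖toTorus u‖ ≤ ‖u‖ := by
  have hcoord (i : Fin 2) : ‖(u i : AddCircle (1 : ℝ))‖ ≤ ‖u‖ :=
    QuotientAddGroup.norm_mk_le_norm.trans (norm_le_pi_norm u i)
  exact max_le (hcoord 0) (hcoord 1)

theorem toTorus_ne_zero {u : Fin 2 → ℝ} (hu : u ≠ 0) (hu_half : ‖u‖ ≤ 1 / 2) :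
    toTorus u ≠ 0 := by
  obtain ⟨i, hi⟩ := Function.ne_iff.1 hu
  have hcoord : ‖(u i : AddCircle (1 : ℝ))‖ = |u i| :=
    (AddCircle.norm_coe_eq_abs_iff (p := 1) one_ne_zero).2 <| by
      simpa using (norm_le_pi_norm u i).trans hu_half
  intro h0
  have : (u i : AddCircle (1 : ℝ)) = 0 := by
    fin_cases i
    exacts [congrArg Prod.fst h0, congrArg Prod.snd h0]
  rw [this, norm_zero, eq_comm, abs_eq_zero] at hcoord
  exact hi hcoord

theorem toTorus_mulVec (A : Matrix (Fin 2) (Fin 2) ℤ) (u : Fin 2 → ℝ) :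
    toTorus (A.map (Int.cast : ℤ → ℝ) *ᵥ u) =
      (A 0 0 • (toTorus u).1 + A 0 1 • (toTorus u).2,
        A 1 0 • (toTorus u).1 + A 1 1 • (toTorus u).2) := by
  simp [toTorus_apply, ← zsmul_eq_mul]

theorem toTorus_add_sub_toTorus_neg_add (α β : Fin 2 → ℝ) :
    toTorus (α + β) - toTorus (-α + β) = toTorus ((2 : ℝ) • α) := by
  rw [← map_sub]
  congr 1
  module

theorem toTorus_add_add_toTorus_neg_add (α β : Fin 2 → ℝ) :
    toTorus (α + β) + toTorus (-α + β) = toTorus ((2 : ℝ) • β) := by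
  rw [← map_add]
  congr 1
  module

theorem toTorus_neg_add_ne {α β : Fin 2 → ℝ} (hα : α ≠ 0) (hβ : β ≠ 0)
    (hα_small : ‖α‖ ≤ 1 / 4) (hβ_small : ‖β‖ ≤ 1 / 4) :
    ¬(toTorus (-α + β) = toTorus (α + β) ∨ toTorus (-α + β) = -toTorus (α + β)) := by
  have two_smul_ne_zero {γ : Fin 2 → ℝ} (hγ : γ ≠ 0) (hγ_small : ‖γ‖ ≤ 1 / 4) :
      toTorus ((2 : ℝ) • γ) ≠ 0 :=
    toTorus_ne_zero (smul_ne_zero two_ne_zero hγ) (by rw [norm_smul, Real.norm_two]; linarith)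
  rintro (h | h)
  · exact two_smul_ne_zero hα hα_small <| by
      rw [← toTorus_add_sub_toTorus_neg_add α β, h, sub_self]
  · exact two_smul_ne_zero hβ hβ_small <| by
      rw [← toTorus_add_add_toTorus_neg_add α β, h, add_neg_cancel]

theorem min_dist_toTorus_le (α β : Fin 2 → ℝ) :
    min (dist (toTorus (α + β)) (toTorus (-α + β)))
        (dist (toTorus (α + β)) (-toTorus (-α + β))) ≤ 2 * min ‖α‖ ‖β‖ := by
  rw [dist_eq_norm, dist_eq_norm, sub_neg_eq_add, toTorus_add_sub_toTorus_neg_add,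
    toTorus_add_add_toTorus_neg_add]
  refine (min_le_min (norm_toTorus_le _) (norm_toTorus_le _)).trans_eq ?_
  rw [norm_smul, norm_smul, Real.norm_two, mul_min_of_nonneg _ _ zero_le_two]

theorem iterZ_toTorus_add_of_mulVec_eq_smul {B : Matrix (Fin 2) (Fin 2) ℝ} {f : Torus2 ≃ₜ Torus2}
    (hf : ∀ u, f (toTorus u) = toTorus (B *ᵥ u)) {μ ν : ℝ} (hμ : μ ≠ 0) (hν : ν ≠ 0)
    {a b : Fin 2 → ℝ} (ha : B *ᵥ a = μ • a) (hb : B *ᵥ b = ν • b) (n : ℤ) :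
    iterZ f n (toTorus (a + b)) = toTorus (μ ^ n • a + ν ^ n • b) := by
  simpa using iterZ_apply_eq_of_apply_eq_succ f (fun n ↦ toTorus (μ ^ n • a + ν ^ n • b))
    (fun n ↦ by
      rw [hf, mulVec_add, mulVec_smul, mulVec_smul, ha, hb, smul_smul, smul_smul,
        zpow_add_one₀ hμ, zpow_add_one₀ hν]) n

theorem min_norm_zpow_smul_inv_zpow_smul_le {𝕜 E : Type*} [NormedField 𝕜]
    [SeminormedAddCommGroup E] [NormedSpace 𝕜 E] (μ : 𝕜) (a b : E) (n : ℤ) :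
    min ‖μ ^ n • a‖ ‖μ⁻¹ ^ n • b‖ ≤ max ‖a‖ ‖b‖ := by
  rw [norm_smul, norm_smul, _root_.inv_zpow, norm_inv]
  rcases le_or_gt ‖μ ^ n‖ 1 with hle | hgt
  · exact (min_le_left _ _).trans <|
      (mul_le_of_le_one_left (norm_nonneg a) hle).trans (le_max_left _ _)
  · exact (min_le_right _ _).trans <|
      (mul_le_of_le_one_left (norm_nonneg b) (inv_le_one_of_one_le₀ hgt.le)).trans
        (le_max_right _ _)

theorem four_le_sq_trace_of_forall_isRoot_norm_ne_one (A : Matrix (Fin 2) (Fin 2) ℤ)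
    (hdet : A.det = 1)
    (hhyp : ∀ z : ℂ, (A.map (Int.cast : ℤ → ℂ)).charpoly.IsRoot z → ‖z‖ ≠ 1) :
    4 ≤ (A.map (Int.cast : ℤ → ℝ)).trace ^ 2 := by
  by_contra! htr
  obtain ⟨z, hz, hz_norm⟩ := Complex.exists_sq_sub_mul_add_one_eq_zero_norm_eq_one htr
  refine hhyp z ?_ hz_norm
  rw [isRoot_charpoly_fin_two_iff, ← Int.cast_det, hdet, trace_fin_two]
  simpa [trace_fin_two] using hz

/-- Let `A ∈ SL(2,ℤ)` be hyperbolic (no eigenvalue of modulus 1), acting on the torus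
`𝕋²` via the homeomorphism `f`.  Then the induced homeomorphism `φ` on the quotient
`S = 𝕋²/±id` is not expansive: for every `c > 0` there are distinct points of `S`
(i.e. points `x, y` of `𝕋²` with `y ≠ ±x`) whose `φ`-orbits stay `c`-close for all
times (distance in `S` being the minimum of the distances between lifts). -/
theorem quotient_of_hyperbolic_torus_automorphism_not_expansive
    (A : Matrix (Fin 2) (Fin 2) ℤ) (hdet : A.det = 1)
    (hhyp : ∀ z : ℂ, (A.map (Int.cast : ℤ → ℂ)).charpoly.IsRoot z →
      ‖z‖ ≠ 1)
    (f : Torus2 ≃ₜ Torus2)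
    (hf : ∀ p : Torus2,
      f p = (A 0 0 • p.1 + A 0 1 • p.2, A 1 0 • p.1 + A 1 1 • p.2)) :
    ∀ c > (0 : ℝ), ∃ x y : Torus2, ¬(y = x ∨ y = -x) ∧
      ∀ n : ℤ,
        min (dist (iterZ f n x) (iterZ f n y))
            (dist (iterZ f n x) (-(iterZ f n y))) ≤ c := by
  intro c hc
  set B : Matrix (Fin 2) (Fin 2) ℝ := A.map (Int.cast : ℤ → ℝ)
  have hfB (u : Fin 2 → ℝ) : f (toTorus u) = toTorus (B *ᵥ u) := by rw [hf, toTorus_mulVec]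
  have hBdet : B.det = 1 := by rw [← Int.cast_det, hdet, Int.cast_one]
  have hBtr : 4 * B.det ≤ B.trace ^ 2 := by
    rw [hBdet, mul_one]
    exact four_le_sq_trace_of_forall_isRoot_norm_ne_one A hdet hhyp
  obtain ⟨μ, hμ⟩ := B.exists_isRoot_charpoly_fin_two hBtr
  have hμ0 : μ ≠ 0 := ne_zero_of_isRoot_charpoly (hBdet ▸ one_ne_zero) hμ
  set δ := min (c / 2) (1 / 4)
  have hδ : 0 < δ := lt_min (half_pos hc) (by norm_num)
  obtain ⟨a, ha_norm, ha⟩ := B.exists_mulVec_eq_smul_norm_eq hμ hδ.le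
  obtain ⟨b, hb_norm, hb⟩ :=
    B.exists_mulVec_eq_smul_norm_eq (isRoot_charpoly_inv_of_det_eq_one hBdet hμ) hδ.le
  have hneg_a : B *ᵥ -a = μ • -a := by rw [mulVec_neg, ha, smul_neg]
  refine ⟨toTorus (a + b), toTorus (-a + b), ?_, fun n ↦ ?_⟩
  · exact toTorus_neg_add_ne (norm_pos_iff.1 (ha_norm ▸ hδ)) (norm_pos_iff.1 (hb_norm ▸ hδ))
      (ha_norm ▸ min_le_right _ _) (hb_norm ▸ min_le_right _ _)
  rw [iterZ_toTorus_add_of_mulVec_eq_smul hfB hμ0 (inv_ne_zero hμ0) ha hb,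
    iterZ_toTorus_add_of_mulVec_eq_smul hfB hμ0 (inv_ne_zero hμ0) hneg_a hb, smul_neg]
  calc _ ≤ 2 * min ‖μ ^ n • a‖ ‖μ⁻¹ ^ n • b‖ := min_dist_toTorus_le _ _
    _ ≤ 2 * max ‖a‖ ‖b‖ := by gcongr; exact min_norm_zpow_smul_inv_zpow_smul_le μ a b n
    _ ≤ c := by rw [ha_norm, hb_norm, max_self]; linarith [min_le_left (c / 2) (1 / 4)]
end
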